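/- arXiv:1908.10575 — 3 statements merged into one kernel-verified Lean document; each statement's English description precedes it below -/
import Mathlib

section
/- Let X be a topological space, I a finite index set with |I| elements, (U_μ)_{μ∈I} an open cover of X, and A a unital C*-algebra. Let (η_μ)_{μ∈I} be a square-root partition of unity subordinate to the cover. Let v¹ = (v¹_{μν}) and v² = (v²_{μν}) be two unitary Čech 1-cocycles subordinate to the cover, let (u_μ)_{μ∈I} be unitaries in A with ‖ u_μ·v¹_{μν}(x)·u_ν* − v²_{μν}(x) ‖ < ε for all μ, ν ∈ I and x ∈ U_μ ∩ U_ν, and assume 0 < ε < 1/(3·(|I|² + 1)). Then there exists a family of continuous maps ū_μ : X → A (μ ∈ I) such that: for every x ∈ U_μ the element ū_μ(x) is unitary and ‖ ū_μ(x) − u_μ ‖ < (|I|² + 1)·ε, and for every x ∈ U_μ ∩ U_ν one has ū_μ(x)·v¹_{μν}(x)·ū_ν(x)* = v²_{μν}(x). -/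
/-! Averaging the conjugates `v²_{μσ} u_σ v¹_{σμ}` against the weights `η_σ²` gives, by the
cocycle identities, elements `a_μ` with `a_ν = v²_{νμ} a_μ v¹_{μν}` on `U_μ ∩ U_ν`, and each
`a_μ` is `ε`-close to `u_μ` on `U_μ`. The unitary part `a |a|⁻¹` of the polar decomposition is
equivariant under multiplication by unitaries on both sides, so it is an exact intertwiner, and it
lies within `4ε` of `u_μ`. Outside `U_μ` the average is first pulled back radially towards `u_μ`,
which keeps it invertible, so that its unitary part is continuous on all of `X`. -/

/-- A unitary Čech 1-cocycle subordinate to the open cover `U`, with values in a unital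
C*-algebra `A`. -/
def IsUnitaryCechCocycle {X I A : Type*} [TopologicalSpace X] [NormedRing A] [StarRing A]
    (U : I → Set X) (v : I → I → X → A) : Prop :=
  (∀ μ ν, Continuous (v μ ν)) ∧
  (∀ μ ν, ∀ x ∈ U μ ∩ U ν, v μ ν x ∈ unitary A) ∧
  (∀ μ ν, ∀ x ∈ U μ ∩ U ν, star (v μ ν x) = v ν μ x) ∧
  (∀ μ, ∀ x ∈ U μ, v μ μ x = 1) ∧
  (∀ μ ν σ, ∀ x ∈ U μ ∩ U ν ∩ U σ, v μ ν x * v ν σ x = v μ σ x)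

/-- A square-root partition of unity subordinate to the cover `U`. -/
def IsSqrtPartitionOfUnity {X I : Type*} [TopologicalSpace X] [Fintype I]
    (U : I → Set X) (η : I → X → ℝ) : Prop :=
  (∀ μ, Continuous (η μ)) ∧ (∀ μ x, 0 ≤ η μ x) ∧
  (∀ μ x, η μ x ≠ 0 → x ∈ U μ) ∧ (∀ x, ∑ μ, (η μ x) ^ 2 = 1)

open Set

section Clamp

lemma max_zero_min_one_two_sub_mul_le {ε t : ℝ} (hε : 0 < ε) (ht : 0 ≤ t) :
    max 0 (min 1 (2 - t / ε)) * t ≤ ε := by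
  obtain ⟨s, hs, rfl⟩ : ∃ s, 0 ≤ s ∧ t = s * ε := ⟨t / ε, by positivity, by field_simp⟩
  rw [mul_div_cancel_right₀ s hε.ne', ← mul_assoc]
  refine mul_le_of_le_one_left hε.le ?_
  rcases le_total (2 - s) 0 with h2 | h2
  · simp [max_eq_left (min_le_of_right_le h2)]
  have hle : max 0 (min 1 (2 - s)) ≤ min 1 (2 - s) := max_le (le_min zero_le_one h2) le_rfl
  rcases le_total s 1 with h1 | h1
  · nlinarith [min_le_left 1 (2 - s)]
  · nlinarith [min_le_right 1 (2 - s)]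

variable {X E : Type*} [TopologicalSpace X] [SeminormedAddCommGroup E] [NormedSpace ℝ E]

lemma exists_continuous_norm_sub_le_and_eq {a : X → E} (ha : Continuous a) (c : E) {ε : ℝ}
    (hε : 0 < ε) :
    ∃ b : X → E, Continuous b ∧ (∀ x, ‖b x - c‖ ≤ ε) ∧ ∀ x, ‖a x - c‖ ≤ ε → b x = a x := by
  set θ : X → ℝ := fun x => max 0 (min 1 (2 - ‖a x - c‖ / ε))
  refine ⟨fun x => c + θ x • (a x - c), by fun_prop (disch := exact hε.ne'), fun x => ?_,
    fun x hx => ?_⟩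
  · rw [add_sub_cancel_left, norm_smul, Real.norm_of_nonneg (le_max_left _ _)]
    exact max_zero_min_one_two_sub_mul_le hε (norm_nonneg _)
  · have : θ x = 1 := by
      have : 1 ≤ 2 - ‖a x - c‖ / ε := by rw [le_sub_comm, div_le_iff₀ hε]; linarith
      simp [θ, this]
    simp [this]

end Clamp

section Polar

variable {A : Type*} [CStarAlgebra A]

noncomputable def invSqrt (a : A) : A := cfc (fun t : ℝ => (√t)⁻¹) a

noncomputable def polarUnitary (b : A) : A := b * invSqrt (star b * b)

lemma continuousOn_inv_sqrt : ContinuousOn (fun t : ℝ => (√t)⁻¹) (Ioi 0) :=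
  Real.continuous_sqrt.continuousOn.inv₀ fun _ ht => (Real.sqrt_pos.2 ht).ne'

lemma abs_inv_sqrt_sub_one_le {t : ℝ} (ht : 1 / 2 ≤ t) : |(√t)⁻¹ - 1| ≤ |t - 1| := by
  obtain ⟨s, hs, rfl⟩ : ∃ s, 0 < s ∧ t = s ^ 2 :=
    ⟨√t, Real.sqrt_pos.2 (by linarith), (Real.sq_sqrt (by linarith)).symm⟩
  have hs7 : 7 / 10 ≤ s := by nlinarith
  rw [Real.sqrt_sq hs.le, show s⁻¹ - 1 = (1 - s) / s by field_simp,
    show s ^ 2 - 1 = (1 - s) * -(s + 1) by ring, abs_div, abs_mul, abs_neg, abs_of_pos hs,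
    abs_of_pos (by linarith : 0 < s + 1), div_le_iff₀ hs]
  nlinarith [abs_nonneg (1 - s)]

lemma abs_sub_one_le_of_mem_spectrum {a : A} {t : ℝ} (ht : t ∈ spectrum ℝ a) :
    |t - 1| ≤ ‖1 - a‖ := by
  cases subsingleton_or_nontrivial A
  · simp [spectrum.of_subsingleton] at ht
  have h : 1 - t ∈ spectrum ℝ (1 - a) := by
    rw [← map_one (algebraMap ℝ A), ← spectrum.singleton_sub_eq]
    exact Set.sub_mem_sub rfl ht
  simpa [abs_sub_comm] using spectrum.norm_le_norm_of_mem h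

lemma spectrum_star_mul_self_subset_Ioi {b : A} (hb : IsUnit b) :
    spectrum ℝ (star b * b) ⊆ Ioi 0 := fun t ht =>
  (spectrum_star_mul_self_nonneg t ht).lt_of_ne <| by
    rintro rfl
    exact spectrum.zero_notMem ℝ (hb.star.mul hb) ht

lemma isSelfAdjoint_invSqrt (a : A) : IsSelfAdjoint (invSqrt a) := cfc_predicate _ a

lemma invSqrt_mul_self_mul_invSqrt {a : A} (ha : IsSelfAdjoint a)
    (hspec : spectrum ℝ a ⊆ Ioi 0) : invSqrt a * a * invSqrt a = 1 := by
  have hf : ContinuousOn (fun t : ℝ => (√t)⁻¹) (spectrum ℝ a) := continuousOn_inv_sqrt.mono hspec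
  nth_rewrite 2 [← cfc_id' ℝ a]
  rw [invSqrt, ← cfc_mul .., ← cfc_mul .., ← cfc_one ℝ a]
  refine cfc_congr fun t ht => ?_
  have h0 := hspec ht
  simp only [Pi.one_apply]
  field_simp
  rw [Real.sq_sqrt h0.le, div_self h0.ne']

lemma isUnit_invSqrt {a : A} (ha : IsSelfAdjoint a) (hspec : spectrum ℝ a ⊆ Ioi 0) :
    IsUnit (invSqrt a) :=
  (isUnit_cfc_iff _ a (continuousOn_inv_sqrt.mono hspec)).2 fun t ht => by
    simpa using (Real.sqrt_pos.2 (hspec ht)).ne'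

lemma invSqrt_star_mul_mul {a v : A} (hv : v ∈ unitary A) (ha : IsSelfAdjoint a)
    (hspec : spectrum ℝ a ⊆ Ioi 0) : invSqrt (star v * a * v) = star v * invSqrt a * v := by
  have hf : ContinuousOn (fun t : ℝ => (√t)⁻¹) (spectrum ℝ a) := continuousOn_inv_sqrt.mono hspec
  have hφ : Continuous (Unitary.conjStarAlgAut ℝ A (star ⟨v, hv⟩)) :=
    (continuous_const.mul continuous_id).mul continuous_const
  simpa [invSqrt] using (StarAlgHomClass.map_cfc _ (fun t : ℝ => (√t)⁻¹) a hf hφ).symm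

lemma norm_invSqrt_sub_one_le {a : A} (ha : IsSelfAdjoint a) (h : ‖1 - a‖ ≤ 1 / 2) :
    ‖invSqrt a - 1‖ ≤ ‖1 - a‖ := by
  have hspec : ∀ t ∈ spectrum ℝ a, 1 / 2 ≤ t := fun t ht => by
    linarith [neg_abs_le (t - 1), abs_sub_one_le_of_mem_spectrum ht]
  have hf : ContinuousOn (fun t : ℝ => (√t)⁻¹) (spectrum ℝ a) :=
    continuousOn_inv_sqrt.mono fun t ht => mem_Ioi.2 (by linarith [hspec t ht])
  have hsub : invSqrt a - 1 = cfc (fun t : ℝ => (√t)⁻¹ - 1) a := by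
    rw [cfc_sub .., cfc_const_one ℝ a, invSqrt]
  rw [hsub]
  exact norm_cfc_le (norm_nonneg _) fun t ht =>
    (abs_inv_sqrt_sub_one_le (hspec t ht)).trans (abs_sub_one_le_of_mem_spectrum ht)

lemma IsUnit.of_norm_sub_lt_one_of_mem_unitary {b u : A} (hu : u ∈ unitary A)
    (h : ‖b - u‖ < 1) : IsUnit b := by
  have hsmall : ‖star u * (u - b)‖ < 1 := by
    rwa [CStarRing.norm_mem_unitary_mul _ (Unitary.star_mem hu), norm_sub_rev]
  have hb : b = u * (1 - star u * (u - b)) := by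
    rw [mul_sub, mul_one, ← mul_assoc, Unitary.mul_star_self_of_mem hu, one_mul, sub_sub_cancel]
  rw [hb]
  exact (Unitary.isUnit_coe (U := ⟨u, hu⟩)).mul (isUnit_one_sub_of_norm_lt_one hsmall)

lemma polarUnitary_mem_unitary {b : A} (hb : IsUnit b) : polarUnitary b ∈ unitary A := by
  have hm := IsSelfAdjoint.star_mul_self b
  have hspec := spectrum_star_mul_self_subset_Ioi hb
  have hstar : star (polarUnitary b) * polarUnitary b = 1 := by
    rw [polarUnitary, star_mul, (isSelfAdjoint_invSqrt _).star_eq, mul_assoc,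
      ← mul_assoc (star b), ← mul_assoc, invSqrt_mul_self_mul_invSqrt hm hspec]
  exact ((hb.mul (isUnit_invSqrt hm hspec)).mem_unitary_iff_star_mul_self).2 hstar

lemma polarUnitary_mul_mul {b w v : A} (hb : IsUnit b) (hw : w ∈ unitary A)
    (hv : v ∈ unitary A) : polarUnitary (w * b * v) = w * polarUnitary b * v := by
  have hconj : star (w * b * v) * (w * b * v) = star v * (star b * b) * v := by
    simp only [star_mul, mul_assoc]
    rw [← mul_assoc (star w) w, Unitary.star_mul_self_of_mem hw, one_mul]
  rw [polarUnitary, hconj, invSqrt_star_mul_mul hv (.star_mul_self b)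
    (spectrum_star_mul_self_subset_Ioi hb), polarUnitary]
  simp only [mul_assoc]
  rw [← mul_assoc v (star v), Unitary.mul_star_self_of_mem hv, one_mul]

lemma polarUnitary_mul_mul_star_eq {b b' v w : A} (hb : IsUnit b) (hv : v ∈ unitary A)
    (hw : w ∈ unitary A) (h : b * v = w * b') :
    polarUnitary b * v * star (polarUnitary b') = w := by
  have hb' : b' = star w * b * v := by
    rw [mul_assoc, h, ← mul_assoc, Unitary.star_mul_self_of_mem hw, one_mul]
  have hp := Unitary.mul_star_self_of_mem (polarUnitary_mem_unitary hb)
  rw [hb', polarUnitary_mul_mul hb (Unitary.star_mem hw) hv, star_mul, star_mul, star_star,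
    mul_assoc, ← mul_assoc v, Unitary.mul_star_self_of_mem hv, one_mul, ← mul_assoc, hp, one_mul]

lemma norm_one_sub_star_mul_self_le {b u : A} (hu : u ∈ unitary A) :
    ‖1 - star b * b‖ ≤ 2 * ‖b - u‖ + ‖b - u‖ ^ 2 := by
  have h : 1 - star b * b = -(star u * (b - u) + star (b - u) * u + star (b - u) * (b - u)) := by
    simp only [star_sub, mul_sub, sub_mul, Unitary.star_mul_self_of_mem hu]
    abel
  rw [h, norm_neg]
  refine (norm_add₃_le ..).trans_eq ?_
  rw [CStarRing.norm_mem_unitary_mul _ (Unitary.star_mem hu), CStarRing.norm_mul_mem_unitary _ hu,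
    CStarRing.norm_star_mul_self, norm_star]
  ring

lemma norm_polarUnitary_sub_le {b u : A} (hu : u ∈ unitary A) (h : ‖b - u‖ ≤ 1 / 5) :
    ‖polarUnitary b - u‖ ≤ 4 * ‖b - u‖ := by
  nontriviality A
  set d := ‖b - u‖
  have hd : 0 ≤ d := norm_nonneg _
  have hm := norm_one_sub_star_mul_self_le (b := b) hu
  have hg : ‖invSqrt (star b * b) - 1‖ ≤ 2 * d + d ^ 2 :=
    (norm_invSqrt_sub_one_le (.star_mul_self b) (by nlinarith)).trans hm
  have hb : ‖b‖ ≤ 1 + d := by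
    simpa [CStarRing.norm_of_mem_unitary hu] using norm_le_norm_add_norm_sub' b u
  calc ‖polarUnitary b - u‖ = ‖b * (invSqrt (star b * b) - 1) + (b - u)‖ := by
        rw [polarUnitary, mul_sub, mul_one, sub_add_sub_cancel]
    _ ≤ ‖b‖ * ‖invSqrt (star b * b) - 1‖ + d :=
        (norm_add_le _ _).trans (by gcongr; exact norm_mul_le _ _)
    _ ≤ (1 + d) * (2 * d + d ^ 2) + d := by gcongr
    _ ≤ 4 * d := by nlinarith

lemma Continuous.polarUnitary {X : Type*} [TopologicalSpace X] {b : X → A} (hb : Continuous b)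
    (hb_unit : ∀ x, IsUnit (b x)) : Continuous fun x => polarUnitary (b x) := by
  refine hb.mul (Continuous.cfc_of_mem_nhdsSet _ (isOpen_Ioi.mem_nhdsSet.2 ?_)
    (hb.star.mul hb) (fun x => .star_mul_self (b x)) continuousOn_inv_sqrt)
  exact iUnion_subset fun x => spectrum_star_mul_self_subset_Ioi (hb_unit x)

end Polar

section Cech

variable {X I A : Type*} [TopologicalSpace X] [Fintype I]

noncomputable def averagedIntertwiner [Ring A] [Module ℝ A] (η : I → X → ℝ)
    (v₁ v₂ : I → I → X → A) (u : I → A) (μ : I) (x : X) : A :=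
  ∑ σ, η σ x ^ 2 • (v₂ μ σ x * u σ * v₁ σ μ x)

variable [NormedRing A] [StarRing A] [NormedAlgebra ℝ A] {U : I → Set X} {η : I → X → ℝ}
  {v₁ v₂ : I → I → X → A} {u : I → A}

lemma continuous_averagedIntertwiner (hη : IsSqrtPartitionOfUnity U η)
    (h₁ : IsUnitaryCechCocycle U v₁) (h₂ : IsUnitaryCechCocycle U v₂) (μ : I) :
    Continuous (averagedIntertwiner η v₁ v₂ u μ) :=
  continuous_finsetSum _ fun σ _ =>
    ((hη.1 σ).pow 2).smul (((h₂.1 μ σ).mul continuous_const).mul (h₁.1 σ μ))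

lemma averagedIntertwiner_mul_eq_mul (hη : IsSqrtPartitionOfUnity U η)
    (h₁ : IsUnitaryCechCocycle U v₁) (h₂ : IsUnitaryCechCocycle U v₂) {μ ν : I} {x : X}
    (hx : x ∈ U μ ∩ U ν) :
    averagedIntertwiner η v₁ v₂ u μ x * v₁ μ ν x =
      v₂ μ ν x * averagedIntertwiner η v₁ v₂ u ν x := by
  simp only [averagedIntertwiner, Finset.mul_sum, Finset.sum_mul, mul_smul_comm, smul_mul_assoc]
  refine Finset.sum_congr rfl fun σ _ => ?_
  by_cases hσ : η σ x = 0
  · simp [hσ]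
  have hxσ := hη.2.2.1 σ x hσ
  rw [← h₂.2.2.2.2 μ ν σ x ⟨hx, hxσ⟩, ← h₁.2.2.2.2 σ μ ν x ⟨⟨hxσ, hx.1⟩, hx.2⟩]
  simp only [mul_assoc]

lemma norm_averagedIntertwiner_sub_lt [CStarRing A] (hη : IsSqrtPartitionOfUnity U η)
    (h₁ : IsUnitaryCechCocycle U v₁) (hu : ∀ μ, u μ ∈ unitary A) {ε : ℝ}
    (hclose : ∀ μ ν, ∀ x ∈ U μ ∩ U ν, ‖u μ * v₁ μ ν x * star (u ν) - v₂ μ ν x‖ < ε)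
    {μ : I} {x : X} (hx : x ∈ U μ) :
    ‖averagedIntertwiner η v₁ v₂ u μ x - u μ‖ < ε := by
  obtain ⟨-, -, hsupp, hsum⟩ := hη
  have hterm : ∀ σ, η σ x ≠ 0 → ‖v₂ μ σ x * u σ * v₁ σ μ x - u μ‖ < ε := fun σ hσ => by
    have hxσ := hsupp σ x hσ
    have hfac : v₂ μ σ x * u σ * v₁ σ μ x - u μ =
        (v₂ μ σ x - u μ * v₁ μ σ x * star (u σ)) * (u σ * v₁ σ μ x) := by
      have hv : v₁ μ σ x * v₁ σ μ x = 1 := by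
        rw [h₁.2.2.2.2 μ σ μ x ⟨⟨hx, hxσ⟩, hx⟩, h₁.2.2.2.1 μ x hx]
      simp only [sub_mul, mul_assoc]
      rw [← mul_assoc (star (u σ)), Unitary.star_mul_self_of_mem (hu σ), one_mul, hv, mul_one]
    rw [hfac, CStarRing.norm_mul_mem_unitary _ (mul_mem (hu σ) (h₁.2.1 σ μ x ⟨hxσ, hx⟩)),
      norm_sub_rev]
    exact hclose μ σ x ⟨hx, hxσ⟩
  obtain ⟨σ₀, hσ₀⟩ : ∃ σ, η σ x ≠ 0 := by
    by_contra! h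
    simpa [h] using hsum x
  calc ‖averagedIntertwiner η v₁ v₂ u μ x - u μ‖
      = ‖∑ σ, η σ x ^ 2 • (v₂ μ σ x * u σ * v₁ σ μ x - u μ)‖ := by
        simp only [averagedIntertwiner, smul_sub, Finset.sum_sub_distrib, ← Finset.sum_smul,
          hsum x, one_smul]
    _ ≤ ∑ σ, η σ x ^ 2 * ‖v₂ μ σ x * u σ * v₁ σ μ x - u μ‖ :=
        (norm_sum_le _ _).trans_eq (by simp only [norm_smul, norm_pow, Real.norm_eq_abs, sq_abs])
    _ < ∑ σ, η σ x ^ 2 * ε := by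
        refine Finset.sum_lt_sum (fun σ _ => ?_) ⟨σ₀, Finset.mem_univ _, ?_⟩
        · by_cases hσ : η σ x = 0
          · simp [hσ]
          · exact mul_le_mul_of_nonneg_left (hterm σ hσ).le (sq_nonneg _)
        · exact mul_lt_mul_of_pos_left (hterm σ₀ hσ₀) (by positivity)
    _ = ε := by rw [← Finset.sum_mul, hsum x, one_mul]

end Cech

theorem approximate_intertwiner_to_exact_general
    {X I A : Type*} [TopologicalSpace X] [Fintype I] [CStarAlgebra A]
    (U : I → Set X)
    (η : I → X → ℝ) (hη : IsSqrtPartitionOfUnity U η)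
    (v1 v2 : I → I → X → A)
    (h1 : IsUnitaryCechCocycle U v1) (h2 : IsUnitaryCechCocycle U v2)
    (u : I → A) (hu : ∀ μ, u μ ∈ unitary A)
    (ε : ℝ) (hε0 : 0 < ε) (hε : ε < 1 / (3 * ((Fintype.card I : ℝ) ^ 2 + 1)))
    (hclose : ∀ μ ν, ∀ x ∈ U μ ∩ U ν, ‖u μ * v1 μ ν x * star (u ν) - v2 μ ν x‖ < ε) :
    ∃ ub : I → X → A,
      (∀ μ, Continuous (ub μ)) ∧
      (∀ μ, ∀ x ∈ U μ, ub μ x ∈ unitary A ∧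
        ‖ub μ x - u μ‖ < ((Fintype.card I : ℝ) ^ 2 + 1) * ε) ∧
      (∀ μ ν, ∀ x ∈ U μ ∩ U ν, ub μ x * v1 μ ν x * star (ub ν x) = v2 μ ν x) := by
  by_cases hI : Fintype.card I ≤ 1
  -- With a single index `u` is already exact, while `|I|² + 1 < 5` is too small for the polar
  -- estimate.
  · refine ⟨fun μ _ => u μ, fun _ => continuous_const,
      fun μ x _ => ⟨hu μ, by rw [sub_self, norm_zero]; positivity⟩, ?_⟩
    rintro μ ν x ⟨hxμ, -⟩
    obtain rfl := Fintype.card_le_one_iff.mp hI μ ν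
    rw [h1.2.2.2.1 μ x hxμ, mul_one, Unitary.mul_star_self_of_mem (hu μ), h2.2.2.2.1 μ x hxμ]
  have hC : (5 : ℝ) ≤ (Fintype.card I : ℝ) ^ 2 + 1 := by
    have : (2 : ℝ) ≤ Fintype.card I := by exact_mod_cast not_le.1 hI
    nlinarith
  have hε5 : ε ≤ 1 / 5 :=
    hε.le.trans (by rw [div_le_div_iff₀ (by positivity) (by norm_num)]; linarith)
  have ha : ∀ μ, ∀ x ∈ U μ, ‖averagedIntertwiner η v1 v2 u μ x - u μ‖ < ε :=
    fun μ x hx => norm_averagedIntertwiner_sub_lt hη h1 hu hclose hx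
  choose b hb_cont hb_near hb_eq using fun μ => exists_continuous_norm_sub_le_and_eq
    (continuous_averagedIntertwiner (u := u) hη h1 h2 μ) (u μ) hε0
  have hb_unit : ∀ μ x, IsUnit (b μ x) := fun μ x =>
    .of_norm_sub_lt_one_of_mem_unitary (hu μ) (by linarith [hb_near μ x])
  have hba : ∀ μ, ∀ x ∈ U μ, b μ x = averagedIntertwiner η v1 v2 u μ x :=
    fun μ x hx => hb_eq μ x (ha μ x hx).le
  refine ⟨fun μ x => polarUnitary (b μ x), fun μ => (hb_cont μ).polarUnitary (hb_unit μ),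
    fun μ x hx => ⟨polarUnitary_mem_unitary (hb_unit μ x), ?_⟩,
    fun μ ν x hx => polarUnitary_mul_mul_star_eq (hb_unit μ x) (h1.2.1 μ ν x hx) (h2.2.1 μ ν x hx)
      (by rw [hba μ x hx.1, hba ν x hx.2, averagedIntertwiner_mul_eq_mul hη h1 h2 hx])⟩
  calc ‖polarUnitary (b μ x) - u μ‖ ≤ 4 * ‖b μ x - u μ‖ :=
        norm_polarUnitary_sub_le (hu μ) ((hb_near μ x).trans hε5)
    _ < 5 * ε := by linarith [hba μ x hx ▸ ha μ x hx]
    _ ≤ ((Fintype.card I : ℝ) ^ 2 + 1) * ε := by gcongr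

/-- Lemma `lem:gauge`(1) with explicit constant `C₁ = |I|² + 1`: an
ε-approximate intertwiner `(u_μ)` between two unitary Čech cocycles can be deformed to an
exact gauge transformation `(ū_μ)` at distance at most `C₁ ε`, provided
`0 < ε < 1/(3 C₁)`. -/
theorem approximate_intertwiner_to_exact
    {X I A : Type*} [TopologicalSpace X] [Fintype I] [CStarAlgebra A]
    (U : I → Set X) (hopen : ∀ μ, IsOpen (U μ)) (hcover : ∀ x, ∃ μ, x ∈ U μ)
    (η : I → X → ℝ) (hη : IsSqrtPartitionOfUnity U η)
    (v1 v2 : I → I → X → A)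
    (h1 : IsUnitaryCechCocycle U v1) (h2 : IsUnitaryCechCocycle U v2)
    (u : I → A) (hu : ∀ μ, u μ ∈ unitary A)
    (ε : ℝ) (hε0 : 0 < ε) (hε : ε < 1 / (3 * ((Fintype.card I : ℝ) ^ 2 + 1)))
    (hclose : ∀ μ ν, ∀ x ∈ U μ ∩ U ν, ‖u μ * v1 μ ν x * star (u ν) - v2 μ ν x‖ < ε) :
    ∃ ub : I → X → A,
      (∀ μ, Continuous (ub μ)) ∧
      (∀ μ, ∀ x ∈ U μ, ub μ x ∈ unitary A ∧
        ‖ub μ x - u μ‖ < ((Fintype.card I : ℝ) ^ 2 + 1) * ε) ∧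
      (∀ μ ν, ∀ x ∈ U μ ∩ U ν, ub μ x * v1 μ ν x * star (ub ν x) = v2 μ ν x) :=
  approximate_intertwiner_to_exact_general U η hη v1 v2 h1 h2 u hu ε hε0 hε hclose
end

section
/- Let X be a topological space, I a finite index set with |I| elements, (U_μ)_{μ∈I} an open cover of X, A a unital C*-algebra, and set C₁ := |I|² + 1. Let v¹ and v² be two unitary Čech 1-cocycles subordinate to the cover, let (u_μ)_{μ∈I} be unitaries in A, and assume 0 < ε < 1/(3·C₁). Suppose ū = (ū_μ)_{μ∈I} and ū' = (ū'_μ)_{μ∈I} are two families of continuous maps X → A such that for each of them: ū_μ(x) is unitary and ‖ū_μ(x) − u_μ‖ < C₁·ε for all x ∈ U_μ, and ū_μ(x)·v¹_{μν}(x)·ū_ν(x)* = v²_{μν}(x) for all x ∈ U_μ ∩ U_ν (and similarly for ū'). Then there exists a family of continuous maps H_μ : X × [0,1] → A such that H_μ(x,0) = ū_μ(x) and H_μ(x,1) = ū'_μ(x) for all x, and for every t ∈ [0,1]: H_μ(x,t) is unitary and ‖H_μ(x,t) − u_μ‖ < 3·C₁·ε for all x ∈ U_μ, and H_μ(x,t)·v¹_{μν}(x)·H_ν(x,t)*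 = v²_{μν}(x) for all x ∈ U_μ ∩ U_ν. -/
open Set

theorem SemiconjBy.ringInverse_right {M : Type*} [MonoidWithZero M] {a x y : M}
    (h : SemiconjBy a x y) (hx : IsUnit x) (hy : IsUnit y) :
    SemiconjBy a (Ring.inverse x) (Ring.inverse y) := by
  obtain ⟨x, rfl⟩ := hx
  obtain ⟨y, rfl⟩ := hy
  simpa only [Ring.inverse_unit] using h.units_inv_right

theorem norm_one_sub_smul_le {E : Type*} [SeminormedAddCommGroup E] [NormedSpace ℝ E] (a : E)
    {t : ℝ} (ht : t ∈ Icc (0 : ℝ) 1) : ‖(1 - t) • a‖ ≤ ‖a‖ := by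
  rw [norm_smul, Real.norm_of_nonneg (sub_nonneg.2 ht.2)]
  exact mul_le_of_le_one_left (norm_nonneg a) (by linarith [ht.1])

section TwoAdd

variable {A : Type*} [CStarAlgebra A]

theorem isUnit_two_add_of_norm_lt {a : A} (ha : ‖a‖ < 2) : IsUnit (2 + a) := by
  nontriviality A
  have h2 : (2 : ℝ) ∈ resolventSet ℝ (-a) :=
    spectrum.mem_resolventSet_of_norm_lt (by simpa [Real.norm_ofNat] using ha)
  simpa [spectrum.mem_resolventSet_iff, sub_neg_eq_add, map_ofNat] using h2

theorem norm_ringInverse_two_add_le {a : A} (ha : ‖a‖ < 2) :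
    ‖Ring.inverse (2 + a)‖ ≤ (2 - ‖a‖)⁻¹ := by
  nontriviality A
  set j := Ring.inverse (2 + a)
  have hj : (2 : ℝ) • j = 1 - a * j := by
    rw [eq_sub_iff_add_eq, ofNat_smul_eq_nsmul, nsmul_eq_mul, Nat.cast_ofNat, ← add_mul,
      Ring.mul_inverse_cancel _ (isUnit_two_add_of_norm_lt ha)]
  have hle : 2 * ‖j‖ ≤ 1 + ‖a‖ * ‖j‖ := calc
    2 * ‖j‖ = ‖(2 : ℝ) • j‖ := by rw [norm_smul, Real.norm_ofNat]
    _ ≤ ‖(1 : A)‖ + ‖a * j‖ := hj ▸ norm_sub_le _ _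
    _ ≤ 1 + ‖a‖ * ‖j‖ := by grw [norm_one, norm_mul_le]
  rw [← one_div, le_div_iff₀ (by linarith)]
  linarith

theorem isUnit_two_add_one_sub_smul {a : A} (ha : ‖a‖ < 2) {t : ℝ} (ht : t ∈ Icc (0 : ℝ) 1) :
    IsUnit (2 + (1 - t) • a) :=
  isUnit_two_add_of_norm_lt ((norm_one_sub_smul_le a ht).trans_lt ha)

theorem star_mul_ringInverse_mem_unitary {z : A} [IsStarNormal z] (hz : IsUnit z) :
    star z * Ring.inverse z ∈ unitary A := by
  refine (hz.star.mul hz.ringInverse).mem_unitary_of_star_mul_self ?_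
  rw [star_mul, star_star, ← Ring.inverse_star, mul_assoc, ← mul_assoc z, ← star_comm_self' z,
    mul_assoc,
    Ring.mul_inverse_cancel _ hz, mul_one, Ring.inverse_mul_cancel _ hz.star]

end TwoAdd

section MobiusPath

variable {A : Type*} [CStarAlgebra A] {w : A} {t : ℝ}

/-- `ω_t(w)`, written in terms of `w - 1` for the norm estimate:
`2 + (1 ± t) • (w - 1) = (1 ∓ t) + (1 ± t) • w`. -/
noncomputable def mobiusPath (w : A) (t : ℝ) : A :=
  (2 + (1 + t) • (w - 1)) * Ring.inverse (2 + (1 - t) • (w - 1))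

theorem isStarNormal_two_add_smul_sub_one (hw : w ∈ unitary A) (c : ℝ) :
    IsStarNormal (2 + c • (w - 1)) := by
  refine ⟨?_⟩
  simp only [Commute, SemiconjBy, star_add, star_smul, star_sub, star_one, star_ofNat,
    star_trivial, mul_add, mul_sub, add_mul, sub_mul, mul_smul_comm, smul_mul_assoc,
    Unitary.mul_star_self_of_mem hw, Unitary.star_mul_self_of_mem hw, mul_one, one_mul, mul_two,
    two_mul]
  module

theorem mul_star_two_add_one_sub_smul (hw : w ∈ unitary A) :
    w * star (2 + (1 - t) • (w - 1)) = 2 + (1 + t) • (w - 1) := by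
  simp only [star_add, star_smul, star_sub, star_one, star_ofNat, star_trivial, mul_add, mul_sub,
    mul_smul_comm, Unitary.mul_star_self_of_mem hw, mul_one, mul_two]
  rw [← one_add_one_eq_two]
  module

theorem mobiusPath_eq_mul_star_mul_ringInverse (hw : w ∈ unitary A) :
    mobiusPath w t =
      w * (star (2 + (1 - t) • (w - 1)) * Ring.inverse (2 + (1 - t) • (w - 1))) := by
  rw [mobiusPath, ← mul_assoc, mul_star_two_add_one_sub_smul hw]

theorem mobiusPath_mem_unitary (hw : w ∈ unitary A) (hw1 : ‖w - 1‖ < 2)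
    (ht : t ∈ Icc (0 : ℝ) 1) : mobiusPath w t ∈ unitary A := by
  rw [mobiusPath_eq_mul_star_mul_ringInverse hw]
  have := isStarNormal_two_add_smul_sub_one hw (1 - t)
  exact mul_mem hw (star_mul_ringInverse_mem_unitary (isUnit_two_add_one_sub_smul hw1 ht))

theorem norm_mobiusPath_sub_one_le (hw1 : ‖w - 1‖ < 2) (ht : t ∈ Icc (0 : ℝ) 1) :
    ‖mobiusPath w t - 1‖ ≤ ‖w - 1‖ := by
  set z := 2 + (1 - t) • (w - 1)
  have hz : IsUnit z := isUnit_two_add_one_sub_smul hw1 ht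
  have hnorm : ‖(1 - t) • (w - 1)‖ = (1 - t) * ‖w - 1‖ := by
    rw [norm_smul, Real.norm_of_nonneg (sub_nonneg.2 ht.2)]
  have hpos : 0 < 2 - (1 - t) * ‖w - 1‖ := by nlinarith [ht.1, ht.2, norm_nonneg (w - 1)]
  have hsub : mobiusPath w t - 1 = (2 * t) • ((w - 1) * Ring.inverse z) := by
    rw [mobiusPath, ← smul_mul_assoc,
      show (2 * t) • (w - 1) = 2 + (1 + t) • (w - 1) - z by simp only [z]; module, sub_mul,
      Ring.mul_inverse_cancel z hz]
  have hinv : ‖Ring.inverse z‖ ≤ (2 - (1 - t) * ‖w - 1‖)⁻¹ :=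
    hnorm ▸ norm_ringInverse_two_add_le ((norm_one_sub_smul_le _ ht).trans_lt hw1)
  have hfactor : 2 * t * (2 - (1 - t) * ‖w - 1‖)⁻¹ ≤ 1 := by
    rw [← div_eq_mul_inv, div_le_one hpos]
    nlinarith [ht.2]
  calc ‖mobiusPath w t - 1‖ = 2 * t * ‖(w - 1) * Ring.inverse z‖ := by
        rw [hsub, norm_smul, Real.norm_of_nonneg (by linarith [ht.1])]
    _ ≤ 2 * t * (‖w - 1‖ * (2 - (1 - t) * ‖w - 1‖)⁻¹) := by
        gcongr
        · linarith [ht.1]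
        · exact (norm_mul_le _ _).trans (by gcongr)
    _ = ‖w - 1‖ * (2 * t * (2 - (1 - t) * ‖w - 1‖)⁻¹) := by ring
    _ ≤ ‖w - 1‖ := mul_le_of_le_one_right (norm_nonneg _) hfactor

theorem mobiusPath_semiconj {g w₁ w₂ : A} (hg : SemiconjBy g w₂ w₁) (hw₁ : ‖w₁ - 1‖ < 2)
    (hw₂ : ‖w₂ - 1‖ < 2) (ht : t ∈ Icc (0 : ℝ) 1) :
    SemiconjBy g (mobiusPath w₂ t) (mobiusPath w₁ t) := by
  have hlin (c : ℝ) : SemiconjBy g (2 + c • (w₂ - 1)) (2 + c • (w₁ - 1)) :=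
    SemiconjBy.add_right (Commute.ofNat_right g 2) ((hg.sub_right (.one_right g)).smul_right c)
  exact (hlin _).mul_right ((hlin _).ringInverse_right (isUnit_two_add_one_sub_smul hw₂ ht)
    (isUnit_two_add_one_sub_smul hw₁ ht))

end MobiusPath

section UnitBallRetraction

variable {E : Type*} [SeminormedAddCommGroup E] [NormedSpace ℝ E]

noncomputable def unitBallRetraction (x : E) : E := (max 1 ‖x‖)⁻¹ • x

theorem norm_unitBallRetraction_le (x : E) : ‖unitBallRetraction x‖ ≤ 1 := by
  have hpos : 0 < max 1 ‖x‖ := lt_max_of_lt_left one_pos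
  rw [unitBallRetraction, norm_smul, norm_inv, Real.norm_of_nonneg hpos.le, inv_mul_le_one₀ hpos]
  exact le_max_right _ _

theorem unitBallRetraction_of_norm_le {x : E} (hx : ‖x‖ ≤ 1) : unitBallRetraction x = x := by
  rw [unitBallRetraction, max_eq_left hx, inv_one, one_smul]

@[fun_prop]
theorem continuous_unitBallRetraction : Continuous (unitBallRetraction : E → E) :=
  ((continuous_const.max continuous_norm).inv₀ fun _ ↦ (lt_max_of_lt_left one_pos).ne').smul
    continuous_id

end UnitBallRetraction

section UnitaryPath

variable {A : Type*} [CStarAlgebra A] {a b : A} {t : ℝ}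

/-- For unitaries `a`, `b` with `‖b - a‖ ≤ 1` this is `mobiusPath (b * star a) t * a`
(`unitaryPath_eq_mobiusPath_mul`). Written this way it equals `a` at `t = 0` and `b` at `t = 1`
for all `a`, `b`, and the retraction keeps the inverted element a unit, so that the path is
continuous in `(a, b, t)` everywhere. -/
noncomputable def unitaryPath (a b : A) (t : ℝ) : A :=
  a + (2 * t) • (Ring.inverse (2 + (1 - t) • unitBallRetraction ((b - a) * star a)) * (b - a))

@[simp]
theorem unitaryPath_zero (a b : A) : unitaryPath a b 0 = a := by
  simp [unitaryPath]

@[simp]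
theorem unitaryPath_one (a b : A) : unitaryPath a b 1 = b := by
  have h2 : IsUnit (2 : A) := by simpa using isUnit_two_add_of_norm_lt (a := (0 : A)) (by simp)
  rw [unitaryPath, sub_self, zero_smul, add_zero, mul_one, ofNat_smul_eq_nsmul,
    nsmul_eq_mul, Nat.cast_ofNat, ← mul_assoc, Ring.mul_inverse_cancel _ h2, one_mul,
    add_sub_cancel]

theorem continuousOn_unitaryPath :
    ContinuousOn (fun p : (A × A) × ℝ ↦ unitaryPath p.1.1 p.1.2 p.2) (univ ×ˢ Icc 0 1) := by
  rintro ⟨⟨a, b⟩, t⟩ ⟨-, ht⟩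
  obtain ⟨u, hu⟩ := isUnit_two_add_one_sub_smul
    ((norm_unitBallRetraction_le ((b - a) * star a)).trans_lt one_lt_two) ht
  have hinv : ContinuousAt (fun p : (A × A) × ℝ ↦
      Ring.inverse (2 + (1 - p.2) • unitBallRetraction ((p.1.2 - p.1.1) * star p.1.1)))
      ((a, b), t) :=
    ContinuousAt.comp (g := Ring.inverse) (hu ▸ NormedRing.inverse_continuousAt u)
      (by fun_prop)
  unfold unitaryPath
  exact ContinuousAt.continuousWithinAt (by fun_prop)

theorem norm_mul_star_sub_one (ha : a ∈ unitary A) (b : A) : ‖b * star a - 1‖ = ‖b - a‖ := by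
  rw [← Unitary.mul_star_self_of_mem ha, ← sub_mul,
    CStarRing.norm_mul_mem_unitary _ (Unitary.star_mem ha)]

theorem unitaryPath_eq_mobiusPath_mul (ha : a ∈ unitary A) (hab : ‖b - a‖ ≤ 1)
    (ht : t ∈ Icc (0 : ℝ) 1) : unitaryPath a b t = mobiusPath (b * star a) t * a := by
  set h := b * star a - 1
  have hh : (b - a) * star a = h := by rw [sub_mul, Unitary.mul_star_self_of_mem ha]
  have hba : b - a = h * a := by rw [← hh, mul_assoc, Unitary.star_mul_self_of_mem ha, mul_one]
  set z := 2 + (1 - t) • h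
  have hz : IsUnit z := isUnit_two_add_one_sub_smul
    ((norm_mul_star_sub_one ha b).trans_le hab |>.trans_lt one_lt_two) ht
  have hcomm : Commute h (Ring.inverse z) :=
    SemiconjBy.ringInverse_right
      (SemiconjBy.add_right (Commute.ofNat_right h 2) ((Commute.refl h).smul_right _)) hz hz
  have hretr : unitBallRetraction ((b - a) * star a) = h := by
    rw [unitBallRetraction_of_norm_le (by rwa [hh, norm_mul_star_sub_one ha]), hh]
  calc unitaryPath a b t = a + (2 * t) • (Ring.inverse z * h * a) := by
        rw [unitaryPath, hretr, hba, mul_assoc]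
    _ = (z * Ring.inverse z + (2 * t) • (h * Ring.inverse z)) * a := by
        rw [Ring.mul_inverse_cancel z hz, hcomm.eq, add_mul, one_mul, smul_mul_assoc]
    _ = (2 + (1 + t) • h) * Ring.inverse z * a := by
        rw [← smul_mul_assoc, ← add_mul, show z + (2 * t) • h = 2 + (1 + t) • h by module]

theorem unitaryPath_mem_unitary (ha : a ∈ unitary A) (hb : b ∈ unitary A) (hab : ‖b - a‖ ≤ 1)
    (ht : t ∈ Icc (0 : ℝ) 1) : unitaryPath a b t ∈ unitary A := by
  rw [unitaryPath_eq_mobiusPath_mul ha hab ht]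
  refine mul_mem (mobiusPath_mem_unitary (mul_mem hb (Unitary.star_mem ha)) ?_ ht) ha
  linarith [norm_mul_star_sub_one ha b]

theorem norm_unitaryPath_sub_le (ha : a ∈ unitary A) (hab : ‖b - a‖ ≤ 1)
    (ht : t ∈ Icc (0 : ℝ) 1) : ‖unitaryPath a b t - a‖ ≤ ‖b - a‖ := by
  have hw : ‖b * star a - 1‖ < 2 := by linarith [norm_mul_star_sub_one ha b]
  calc ‖unitaryPath a b t - a‖ = ‖mobiusPath (b * star a) t - 1‖ := by
        rw [unitaryPath_eq_mobiusPath_mul ha hab ht, ← sub_one_mul,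
          CStarRing.norm_mul_mem_unitary _ ha]
    _ ≤ ‖b - a‖ := (norm_mobiusPath_sub_one_le hw ht).trans_eq (norm_mul_star_sub_one ha b)

theorem unitaryPath_mul_mul_star {a₁ b₁ a₂ b₂ v g : A} (ha₁ : a₁ ∈ unitary A)
    (ha₂ : a₂ ∈ unitary A) (hb₂ : b₂ ∈ unitary A)
    (hab₁ : ‖b₁ - a₁‖ ≤ 1) (hab₂ : ‖b₂ - a₂‖ ≤ 1) (ht : t ∈ Icc (0 : ℝ) 1)
    (hag : a₁ * v * star a₂ = g) (hbg : b₁ * v * star b₂ = g) :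
    unitaryPath a₁ b₁ t * v * star (unitaryPath a₂ b₂ t) = g := by
  have hw₁ : ‖b₁ * star a₁ - 1‖ < 2 := by linarith [norm_mul_star_sub_one ha₁ b₁]
  have hw₂ : ‖b₂ * star a₂ - 1‖ < 2 := by linarith [norm_mul_star_sub_one ha₂ b₂]
  have hsemi : SemiconjBy g (b₂ * star a₂) (b₁ * star a₁) := calc
    g * (b₂ * star a₂) = b₁ * v * (star b₂ * b₂) * star a₂ := by
      rw [← hbg]; simp only [mul_assoc]
    _ = b₁ * (star a₁ * a₁) * v * star a₂ := by
      rw [Unitary.star_mul_self_of_mem hb₂, Unitary.star_mul_self_of_mem ha₁, mul_one, mul_one]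
    _ = b₁ * star a₁ * g := by
      rw [← hag]; simp only [mul_assoc]
  have hω := mobiusPath_semiconj hsemi hw₁ hw₂ ht
  have hω₂ := mobiusPath_mem_unitary (mul_mem hb₂ (Unitary.star_mem ha₂)) hw₂ ht
  rw [unitaryPath_eq_mobiusPath_mul ha₁ hab₁ ht, unitaryPath_eq_mobiusPath_mul ha₂ hab₂ ht,
    star_mul]
  calc mobiusPath (b₁ * star a₁) t * a₁ * v * (star a₂ * star (mobiusPath (b₂ * star a₂) t))
      = mobiusPath (b₁ * star a₁) t * g * star (mobiusPath (b₂ * star a₂) t) := by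
        rw [← hag]; simp only [mul_assoc]
    _ = g * (mobiusPath (b₂ * star a₂) t * star (mobiusPath (b₂ * star a₂) t)) := by
        rw [← hω.eq, mul_assoc]
    _ = g := by rw [Unitary.mul_star_self_of_mem hω₂, mul_one]

end UnitaryPath

theorem gauge_transformations_homotopic_general
    {X I A : Type*} [TopologicalSpace X] [CStarAlgebra A]
    (U : I → Set X)
    (C₁ : ℝ)
    (v1 v2 : I → I → X → A)
    (u : I → A)
    (ε : ℝ) (hε0 : 0 < ε) (hε : ε < 1 / (3 * C₁))
    (ub ub' : I → X → A)
    (hub_cont : ∀ μ, Continuous (ub μ)) (hub'_cont : ∀ μ, Continuous (ub' μ))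
    (hub_unit : ∀ μ, ∀ x ∈ U μ, ub μ x ∈ unitary A ∧ ‖ub μ x - u μ‖ < C₁ * ε)
    (hub'_unit : ∀ μ, ∀ x ∈ U μ, ub' μ x ∈ unitary A ∧ ‖ub' μ x - u μ‖ < C₁ * ε)
    (hub_gauge : ∀ μ ν, ∀ x ∈ U μ ∩ U ν, ub μ x * v1 μ ν x * star (ub ν x) = v2 μ ν x)
    (hub'_gauge : ∀ μ ν, ∀ x ∈ U μ ∩ U ν, ub' μ x * v1 μ ν x * star (ub' ν x) = v2 μ ν x) :
    ∃ H : I → X → ℝ → A,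
      (∀ μ, ContinuousOn (fun q : X × ℝ => H μ q.1 q.2) (Set.univ ×ˢ Set.Icc 0 1)) ∧
      (∀ μ x, H μ x 0 = ub μ x ∧ H μ x 1 = ub' μ x) ∧
      (∀ t ∈ Set.Icc (0 : ℝ) 1,
        (∀ μ, ∀ x ∈ U μ, H μ x t ∈ unitary A ∧ ‖H μ x t - u μ‖ < 3 * C₁ * ε) ∧
        (∀ μ ν, ∀ x ∈ U μ ∩ U ν, H μ x t * v1 μ ν x * star (H ν x t) = v2 μ ν x)) := by
  have hsmall : 3 * C₁ * ε < 1 := by rwa [lt_div_iff₀' (one_div_pos.mp (hε0.trans hε))] at hε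
  have hclose (μ : I) (x : X) (hx : x ∈ U μ) : ‖ub' μ x - ub μ x‖ < 2 * C₁ * ε := calc
    ‖ub' μ x - ub μ x‖ ≤ ‖ub' μ x - u μ‖ + ‖ub μ x - u μ‖ := by
      rw [← norm_sub_rev (u μ) (ub μ x)]; exact norm_sub_le_norm_sub_add_norm_sub _ _ _
    _ < 2 * C₁ * ε := by linarith [(hub_unit μ x hx).2, (hub'_unit μ x hx).2]
  have hle (μ : I) (x : X) (hx : x ∈ U μ) : ‖ub' μ x - ub μ x‖ ≤ 1 := by
    linarith [hclose μ x hx]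
  refine ⟨fun μ x t ↦ unitaryPath (ub μ x) (ub' μ x) t, fun μ ↦ ?_,
    fun μ x ↦ ⟨unitaryPath_zero _ _, unitaryPath_one _ _⟩,
    fun t ht ↦ ⟨fun μ x hx ↦ ⟨?_, ?_⟩, fun μ ν x hx ↦ ?_⟩⟩
  · exact continuousOn_unitaryPath.comp (f := fun q : X × ℝ ↦ ((ub μ q.1, ub' μ q.1), q.2))
      (by fun_prop) fun q hq ↦ ⟨mem_univ _, hq.2⟩
  · exact unitaryPath_mem_unitary (hub_unit μ x hx).1 (hub'_unit μ x hx).1 (hle μ x hx) ht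
  · calc ‖unitaryPath (ub μ x) (ub' μ x) t - u μ‖
        ≤ ‖unitaryPath (ub μ x) (ub' μ x) t - ub μ x‖ + ‖ub μ x - u μ‖ :=
          norm_sub_le_norm_sub_add_norm_sub _ _ _
      _ < 3 * C₁ * ε := by
          linarith [norm_unitaryPath_sub_le (hub_unit μ x hx).1 (hle μ x hx) ht, hclose μ x hx,
            (hub_unit μ x hx).2]
  · exact unitaryPath_mul_mul_star (hub_unit μ x hx.1).1 (hub_unit ν x hx.2).1
      (hub'_unit ν x hx.2).1 (hle μ x hx.1) (hle ν x hx.2) ht (hub_gauge μ ν x hx)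
      (hub'_gauge μ ν x hx)

/-- path-connectedness part of Lemma `lem:gauge`(2): any two exact gauge
transformations in `G_{C₁ε}(u)` (with `C₁ = |I|² + 1` and `0 < ε < 1/(3C₁)`) are joined by
a path of exact gauge transformations inside `G_{3C₁ε}(u)`. -/
theorem gauge_transformations_homotopic
    {X I A : Type*} [TopologicalSpace X] [Fintype I] [CStarAlgebra A]
    (U : I → Set X) (hopen : ∀ μ, IsOpen (U μ)) (hcover : ∀ x, ∃ μ, x ∈ U μ)
    (C₁ : ℝ) (hC₁ : C₁ = (Fintype.card I : ℝ) ^ 2 + 1)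
    (v1 v2 : I → I → X → A)
    (h1 : IsUnitaryCechCocycle U v1) (h2 : IsUnitaryCechCocycle U v2)
    (u : I → A) (hu : ∀ μ, u μ ∈ unitary A)
    (ε : ℝ) (hε0 : 0 < ε) (hε : ε < 1 / (3 * C₁))
    (ub ub' : I → X → A)
    (hub_cont : ∀ μ, Continuous (ub μ)) (hub'_cont : ∀ μ, Continuous (ub' μ))
    (hub_unit : ∀ μ, ∀ x ∈ U μ, ub μ x ∈ unitary A ∧ ‖ub μ x - u μ‖ < C₁ * ε)
    (hub'_unit : ∀ μ, ∀ x ∈ U μ, ub' μ x ∈ unitary A ∧ ‖ub' μ x - u μ‖ < C₁ * ε)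
    (hub_gauge : ∀ μ ν, ∀ x ∈ U μ ∩ U ν, ub μ x * v1 μ ν x * star (ub ν x) = v2 μ ν x)
    (hub'_gauge : ∀ μ ν, ∀ x ∈ U μ ∩ U ν, ub' μ x * v1 μ ν x * star (ub' ν x) = v2 μ ν x) :
    ∃ H : I → X → ℝ → A,
      (∀ μ, ContinuousOn (fun q : X × ℝ => H μ q.1 q.2) (Set.univ ×ˢ Set.Icc 0 1)) ∧
      (∀ μ x, H μ x 0 = ub μ x ∧ H μ x 1 = ub' μ x) ∧
      (∀ t ∈ Set.Icc (0 : ℝ) 1,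
        (∀ μ, ∀ x ∈ U μ, H μ x t ∈ unitary A ∧ ‖H μ x t - u μ‖ < 3 * C₁ * ε) ∧
        (∀ μ ν, ∀ x ∈ U μ ∩ U ν, H μ x t * v1 μ ν x * star (H ν x t) = v2 μ ν x)) :=
  gauge_transformations_homotopic_general U C₁ v1 v2 u ε hε0 hε ub ub' hub_cont hub'_cont hub_unit
    hub'_unit hub_gauge hub'_gauge
end

section
/- Let X be a topological space, I a finite index set, (U_μ)_{μ∈I} an open cover of X, and A a unital C*-algebra. Let G be the simple graph on vertex set I in which distinct μ, ν are adjacent if and only if U_μ ∩ U_ν ≠ ∅; assume G is connected and let T be a spanning tree of G. Then for every ε > 0 and every (ε,U)-flat unitary Čech 1-cocycle v = (v_{μν}) subordinate to the cover, there exist unitaries (u_μ)_{μ∈I} in A such that for every edge {μ,ν} of T and every x ∈ U_μ ∩ U_ν one has ‖ u_μ·v_{μν}(x)·u_ν* − 1 ‖ < ε. -/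
/-- `(ε, U)`-flatness of a Čech 1-cocycle: oscillation less than `ε` on every overlap. -/
def IsFlatCocycle {X I A : Type*} [TopologicalSpace X] [NormedRing A]
    (ε : ℝ) (U : I → Set X) (v : I → I → X → A) : Prop :=
  ∀ μ ν, ∀ x ∈ U μ ∩ U ν, ∀ y ∈ U μ ∩ U ν, ‖v μ ν x - v μ ν y‖ < ε

/-! Root the tree `T` at a vertex `r` and let `u μ` be the product of the values of the cocycle
along the unique path in `T` from `r` to `μ`, each value taken at a point of the corresponding
overlap. Along a tree edge `μ ν` this makes `u μ * v μ ν y * star (u ν) = 1` for one point `y`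
of `U μ ∩ U ν`; since conjugating by unitaries is isometric, flatness then bounds the distance
to `1` at every other point of the overlap by `ε`. -/

namespace SimpleGraph

variable {V M : Type*} [Monoid M] {G : SimpleGraph V}

def Walk.dartProd (g : ∀ μ ν, G.Adj μ ν → M) {u v : V} (p : G.Walk u v) : M :=
  (p.darts.map fun d => g d.fst d.snd d.adj).prod

theorem Walk.dartProd_concat (g : ∀ μ ν, G.Adj μ ν → M) {u v w : V} (p : G.Walk u v)
    (h : G.Adj v w) : (p.concat h).dartProd g = p.dartProd g * g v w h := by
  simp [dartProd, darts_concat, List.concat_eq_append]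

theorem Walk.dartProd_mem (S : Submonoid M) {g : ∀ μ ν, G.Adj μ ν → M}
    (hg : ∀ μ ν h, g μ ν h ∈ S) {u v : V} (p : G.Walk u v) : p.dartProd g ∈ S := by
  refine Submonoid.list_prod_mem _ fun a ha => ?_
  obtain ⟨d, -, rfl⟩ := List.mem_map.1 ha
  exact hg _ _ _

theorem IsTree.exists_forall_adj_mul_eq (hT : G.IsTree) (S : Submonoid M)
    (g : ∀ μ ν, G.Adj μ ν → M) (hgS : ∀ μ ν h, g μ ν h ∈ S)
    (hg : ∀ μ ν h, g μ ν h * g ν μ h.symm = 1) :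
    ∃ u : V → M, (∀ μ, u μ ∈ S) ∧ ∀ μ ν h, u μ * g μ ν h = u ν := by
  classical
  obtain ⟨r⟩ := hT.connected.nonempty
  let p : ∀ μ, G.Walk r μ := fun μ => (hT.connected r μ).some.bypass
  have hp : ∀ μ, (p μ).IsPath := fun μ => Walk.bypass_isPath _
  refine ⟨fun μ => (p μ).dartProd g, fun μ => Walk.dartProd_mem S hgS _, fun μ ν h => ?_⟩
  change (p μ).dartProd g * g μ ν h = (p ν).dartProd g
  by_cases hμ : μ ∈ (p ν).support
  · rw [hT.isAcyclic.path_concat (hp μ) (hp ν) h hμ, Walk.dartProd_concat]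
  · have hν := hT.isAcyclic.mem_support_of_ne_mem_support_of_adj_of_isPath (hp μ) (hp ν) h hμ
    rw [hT.isAcyclic.path_concat (hp ν) (hp μ) h.symm hν, Walk.dartProd_concat, mul_assoc,
      hg ν μ h.symm, mul_one]

end SimpleGraph

theorem CStarRing.norm_mul_mul_star_of_mem_unitary {A : Type*} [NormedRing A] [StarRing A]
    [CStarRing A] {a b : A} (ha : a ∈ unitary A) (hb : b ∈ unitary A) (c : A) :
    ‖a * c * star b‖ = ‖c‖ := by
  rw [norm_mul_mem_unitary _ (Unitary.star_mem hb), norm_mem_unitary_mul _ ha]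

theorem normalize_flat_cocycle_on_spanning_tree_general
    {X I A : Type*} [TopologicalSpace X] [CStarAlgebra A]
    (U : I → Set X)
    (G : SimpleGraph I) (hG : ∀ μ ν, G.Adj μ ν ↔ μ ≠ ν ∧ (U μ ∩ U ν).Nonempty)
    (T : SimpleGraph I) (hTG : T ≤ G) (hT : T.IsTree)
    (ε : ℝ)
    (v : I → I → X → A) (hv : IsUnitaryCechCocycle U v) (hflat : IsFlatCocycle ε U v) :
    ∃ u : I → A, (∀ μ, u μ ∈ unitary A) ∧
      ∀ μ ν, T.Adj μ ν → ∀ x ∈ U μ ∩ U ν,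
        ‖u μ * v μ ν x * star (u ν) - 1‖ < ε := by
  have hedge : ∀ e : T.edgeSet, ∃ x, ∀ μ ∈ (e : Sym2 I), x ∈ U μ := by
    rintro ⟨e, he⟩
    induction e using Sym2.ind with
    | _ μ ν => simpa [Set.Nonempty] using ((hG μ ν).1 (hTG he)).2
  -- one point per unordered edge, so that `v μ ν` and `v ν μ` are evaluated at the same point
  choose pt hpt using hedge
  have hpt_mem : ∀ μ ν (h : T.Adj μ ν), pt ⟨s(μ, ν), h⟩ ∈ U μ ∩ U ν := fun μ ν h =>
    ⟨hpt _ μ (Sym2.mem_mk_left μ ν), hpt _ ν (Sym2.mem_mk_right μ ν)⟩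
  obtain ⟨-, hunitary, -, hone, hcocycle⟩ := hv
  let g : ∀ μ ν, T.Adj μ ν → A := fun μ ν h => v μ ν (pt ⟨s(μ, ν), h⟩)
  obtain ⟨u, hu, hug⟩ := hT.exists_forall_adj_mul_eq (unitary A) g
    (fun μ ν h => hunitary μ ν _ (hpt_mem μ ν h))
    (fun μ ν h => by
      have hx := hpt_mem μ ν h
      simp only [g, Sym2.eq_swap (a := ν)]
      rw [hcocycle μ ν μ _ ⟨hx, hx.1⟩, hone μ _ hx.1])
  refine ⟨u, hu, fun μ ν h x hx => ?_⟩
  have hgauge : u μ * g μ ν h * star (u ν) = 1 := by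
    rw [hug μ ν h]
    exact Unitary.mul_star_self_of_mem (hu ν)
  calc ‖u μ * v μ ν x * star (u ν) - 1‖ = ‖u μ * (v μ ν x - g μ ν h) * star (u ν)‖ := by
        rw [← hgauge, mul_sub, sub_mul]
    _ = ‖v μ ν x - g μ ν h‖ := CStarRing.norm_mul_mul_star_of_mem_unitary (hu μ) (hu ν) _
    _ < ε := hflat μ ν x hx _ (hpt_mem μ ν h)

/-- essential content of Lemma `lem:normalized`: if `G` is the
1-skeleton of the nerve of a finite open cover (assumed connected) and `T` is a spanning
tree of `G`, then every `(ε, U)`-flat unitary Čech cocycle is unitarily equivalent to one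
which is ε-close to `1` on all edges of `T`. -/
theorem normalize_flat_cocycle_on_spanning_tree
    {X I A : Type*} [TopologicalSpace X] [Finite I] [CStarAlgebra A]
    (U : I → Set X) (hopen : ∀ μ, IsOpen (U μ)) (hcover : ∀ x, ∃ μ, x ∈ U μ)
    (G : SimpleGraph I) (hG : ∀ μ ν, G.Adj μ ν ↔ μ ≠ ν ∧ (U μ ∩ U ν).Nonempty)
    (hconn : G.Connected)
    (T : SimpleGraph I) (hTG : T ≤ G) (hT : T.IsTree)
    (ε : ℝ) (hε : 0 < ε)
    (v : I → I → X → A) (hv : IsUnitaryCechCocycle U v) (hflat : IsFlatCocycle ε U v) :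
    ∃ u : I → A, (∀ μ, u μ ∈ unitary A) ∧
      ∀ μ ν, T.Adj μ ν → ∀ x ∈ U μ ∩ U ν,
        ‖u μ * v μ ν x * star (u ν) - 1‖ < ε :=
  normalize_flat_cocycle_on_spanning_tree_general U G hG T hTG hT ε v hv hflat
end
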